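/- Let A ∈ ℝ^{n×n}, B ∈ ℝ^{n×m}. Let Ū ∈ St(r,n) satisfy (I_n − ŪŪᵀ)·A·Ū = 0, let V̄ ∈ St(r,n) satisfy (I_n − V̄V̄ᵀ)·Aᵀ·V̄ = 0, and suppose R := V̄ᵀŪ is invertible. If the pair (A, B) is controllable, i.e., for every nonzero x ∈ ℝⁿ there exists t ≥ 0 with Bᵀ·exp(t·Aᵀ)·x ≠ 0, then the reduced pair (ŪᵀAŪ, R⁻¹·V̄ᵀB) is controllable: for every nonzero z ∈ ℝʳ there exists t ≥ 0 with (R⁻¹·V̄ᵀB)ᵀ·exp(t·(ŪᵀAŪ)ᵀ)·z ≠ 0. -/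

import Mathlib

open Matrix NormedSpace

/-!
Write `R = V̄ᵀŪ`, `A_r = ŪᵀAŪ` and `W = R⁻¹V̄ᵀ`. The two equilibrium equations give the
intertwining `R A_r = (V̄ᵀAV̄) R`, and together with `V̄ᵀA = (V̄ᵀAV̄) V̄ᵀ` this yields
`A_r W = W A`, while `W Ū = 1`. So the reduced pair `(A_r, W B)` is a quotient of `(A, B)`:
`Wᵀ` intertwines `exp (t A_rᵀ)` with `exp (t Aᵀ)`, and an unobservable direction `z` of the
reduced pair would make the nonzero vector `Wᵀ z` unobservable for `(A, B)`.
-/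

open scoped Matrix.Norms.Operator in
theorem Matrix.exp_mul_eq_mul_exp_of_mul_eq {m n 𝕂 : Type*} [Fintype m] [DecidableEq m]
    [Fintype n] [DecidableEq n] [RCLike 𝕂] {X : Matrix m m 𝕂} {Y : Matrix n n 𝕂}
    {P : Matrix m n 𝕂} (h : X * P = P * Y) :
    exp X * P = P * exp Y := by
  have hpow (k : ℕ) : X ^ k * P = P * Y ^ k := by
    induction k with
    | zero => simp
    | succ k ih => rw [pow_succ, pow_succ, Matrix.mul_assoc, h, ← Matrix.mul_assoc, ih,
        Matrix.mul_assoc]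
  let mulRight : Matrix m m 𝕂 →+ Matrix m n 𝕂 := AddMonoidHom.mk' (· * P) (Matrix.add_mul · · P)
  let mulLeft : Matrix n n 𝕂 →+ Matrix m n 𝕂 := AddMonoidHom.mk' (P * ·) (Matrix.mul_add P)
  have hX := (exp_series_hasSum_exp' (𝕂 := 𝕂) X).map mulRight
    (continuous_id.matrix_mul continuous_const)
  have hY := (exp_series_hasSum_exp' (𝕂 := 𝕂) Y).map mulLeft
    (continuous_const.matrix_mul continuous_id)
  refine hX.unique (hY.congr_fun fun k => ?_)
  simp [mulRight, mulLeft, Matrix.smul_mul, Matrix.mul_smul, hpow]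

def IsControllable {n m : Type*} [Fintype n] [DecidableEq n] [Fintype m]
    (A : Matrix n n ℝ) (B : Matrix n m ℝ) : Prop :=
  ∀ x : n → ℝ, x ≠ 0 → ∃ t : ℝ, 0 ≤ t ∧ Bᵀ.mulVec ((exp (t • Aᵀ)).mulVec x) ≠ 0

theorem IsControllable.of_mul_eq_mul {n m r : Type*} [Fintype n] [DecidableEq n] [Fintype m]
    [Fintype r] [DecidableEq r] {A : Matrix n n ℝ} {B : Matrix n m ℝ} (h : IsControllable A B)
    {Ar : Matrix r r ℝ} {W : Matrix r n ℝ} {U : Matrix n r ℝ} (hAW : Ar * W = W * A)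
    (hWU : W * U = 1) :
    IsControllable Ar (W * B) := by
  intro z hz
  have hWz : Wᵀ *ᵥ z ≠ 0 := by
    intro h0
    apply hz
    rw [← Matrix.one_mulVec z, ← transpose_one, ← hWU, transpose_mul, ← mulVec_mulVec, h0,
      mulVec_zero]
  obtain ⟨t, ht, hne⟩ := h _ hWz
  have hexp : exp (t • Aᵀ) * Wᵀ = Wᵀ * exp (t • Arᵀ) := by
    refine exp_mul_eq_mul_exp_of_mul_eq ?_
    rw [Matrix.smul_mul, Matrix.mul_smul, ← transpose_mul, ← hAW, transpose_mul]
  refine ⟨t, ht, ?_⟩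
  rwa [transpose_mul, ← mulVec_mulVec, mulVec_mulVec _ Wᵀ, ← hexp, ← mulVec_mulVec]

section OjaEquilibrium

variable {n r K : Type*} [Fintype n] [DecidableEq n] [Fintype r] [CommRing K]

def IsOjaEquilibrium (A : Matrix n n K) (U : Matrix n r K) : Prop :=
  (1 - U * Uᵀ) * A * U = 0

theorem IsOjaEquilibrium.mul_eq {A : Matrix n n K} {U : Matrix n r K}
    (h : IsOjaEquilibrium A U) : A * U = U * (Uᵀ * A * U) := by
  rwa [IsOjaEquilibrium, Matrix.sub_mul, Matrix.sub_mul, Matrix.one_mul, sub_eq_zero,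
    Matrix.mul_assoc U, Matrix.mul_assoc U] at h

theorem IsOjaEquilibrium.transpose_mul_eq {A : Matrix n n K} {V : Matrix n r K}
    (h : IsOjaEquilibrium Aᵀ V) : Vᵀ * A = Vᵀ * A * V * Vᵀ := by
  simpa [transpose_mul, Matrix.mul_assoc] using congrArg transpose h.mul_eq

theorem IsOjaEquilibrium.intertwining {A : Matrix n n K} {U V : Matrix n r K}
    (hU : IsOjaEquilibrium A U) (hV : IsOjaEquilibrium Aᵀ V) :
    Vᵀ * U * (Uᵀ * A * U) = Vᵀ * A * V * (Vᵀ * U) := by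
  calc Vᵀ * U * (Uᵀ * A * U) = Vᵀ * (A * U) := by rw [hU.mul_eq, Matrix.mul_assoc]
    _ = Vᵀ * A * V * (Vᵀ * U) := by
        rw [← Matrix.mul_assoc, ← Matrix.mul_assoc _ Vᵀ U, ← hV.transpose_mul_eq]

theorem IsOjaEquilibrium.reduced_mul_eq_mul [DecidableEq r] {A : Matrix n n K}
    {U V : Matrix n r K} (hU : IsOjaEquilibrium A U) (hV : IsOjaEquilibrium Aᵀ V)
    (hR : IsUnit (Vᵀ * U)) :
    Uᵀ * A * U * ((Vᵀ * U)⁻¹ * Vᵀ) = (Vᵀ * U)⁻¹ * Vᵀ * A := by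
  set R := Vᵀ * U
  have hdet : IsUnit R.det := (isUnit_iff_isUnit_det R).mp hR
  have hconj : Uᵀ * A * U * R⁻¹ = R⁻¹ * (Vᵀ * A * V) :=
    calc Uᵀ * A * U * R⁻¹ = R⁻¹ * (R * (Uᵀ * A * U)) * R⁻¹ := by
          rw [← Matrix.mul_assoc, nonsing_inv_mul _ hdet, Matrix.one_mul]
      _ = R⁻¹ * (Vᵀ * A * V * R) * R⁻¹ := by rw [hU.intertwining hV]
      _ = R⁻¹ * (Vᵀ * A * V) := by
          rw [Matrix.mul_assoc, Matrix.mul_assoc, mul_nonsing_inv _ hdet, Matrix.mul_one,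
            ← Matrix.mul_assoc]
  rw [← Matrix.mul_assoc, hconj, Matrix.mul_assoc R⁻¹, ← hV.transpose_mul_eq,
    ← Matrix.mul_assoc]

end OjaEquilibrium

theorem reduced_pair_controllable
    (n r m : ℕ)
    (A : Matrix (Fin n) (Fin n) ℝ) (B : Matrix (Fin n) (Fin m) ℝ)
    (Ub : Matrix (Fin n) (Fin r) ℝ)
    (hUbeq : (1 - Ub * Ubᵀ) * A * Ub = 0)
    (Vb : Matrix (Fin n) (Fin r) ℝ)
    (hVbeq : (1 - Vb * Vbᵀ) * Aᵀ * Vb = 0)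
    (hR : IsUnit (Vbᵀ * Ub))
    (hctrb : ∀ x : Fin n → ℝ, x ≠ 0 →
      ∃ t : ℝ, 0 ≤ t ∧ Bᵀ.mulVec ((exp (t • Aᵀ)).mulVec x) ≠ 0) :
    ∀ z : Fin r → ℝ, z ≠ 0 →
      ∃ t : ℝ, 0 ≤ t ∧
        ((Vbᵀ * Ub)⁻¹ * (Vbᵀ * B))ᵀ.mulVec
          ((exp (t • (Ubᵀ * A * Ub)ᵀ)).mulVec z) ≠ 0 := by
  have hWU : (Vbᵀ * Ub)⁻¹ * Vbᵀ * Ub = 1 := by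
    rw [Matrix.mul_assoc, nonsing_inv_mul _ ((isUnit_iff_isUnit_det _).mp hR)]
  have hAB : IsControllable A B := hctrb
  simpa only [IsControllable, Matrix.mul_assoc] using
    hAB.of_mul_eq_mul (IsOjaEquilibrium.reduced_mul_eq_mul hUbeq hVbeq hR) hWU
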